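/- Let F_q be a finite field with q elements and let J be an ideal of F_q[x_1,...,x_n,y_1,...,y_m] that contains the field polynomials x_i^q − x_i for all 1 ≤ i ≤ n and y_j^q − y_j for all 1 ≤ j ≤ m. Then the projection of the variety of J equals the variety of the elimination ideal: π_n(V(J)) = V(J ∩ F_q[y_1,...,y_m]), where π_n : F_q^{n+m} → F_q^m forgets the first n coordinates, V(J) = {(a,b) ∈ F_q^{n+m} : f(a,b) = 0 for all f ∈ J}, and J ∩ F_q[y_1,...,y_m] is the set of polynomials in J involving only the y-variables, viewed as an ideal of F_q[y_1,...,y_m]. -/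

import Mathlib

/-!
If `J` contains the field polynomials, then `J` is the whole vanishing ideal of its zero locus.
Indeed, a polynomial vanishing on all of `K^σ` lies in the ideal of field polynomials (reduce all
exponents below `q`; a reduced polynomial vanishing everywhere is zero). If `f` vanishes on `V(J)`,
pick `g_v ∈ J` with `g_v(v) ≠ 0` for each `v ∉ V(J)`; then `P = ∑_v 1_v g_v^(q-1) ∈ J`
is `1` off `V(J)`, so `f - f P` vanishes everywhere and `f ∈ J`.
For `b ∉ π(V(J))`, the indicator polynomial of `b` in the `y`-variables vanishes on `V(J)`, hence
lies in `J ∩ F[y]`, but it does not vanish at `b`.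
-/

open MvPolynomial

theorem exists_lt_pow_eq_of_pow_eq_self {M : Type*} [Monoid M] {x : M} {q : ℕ} (hq : 1 < q)
    (hx : x ^ q = x) (e : ℕ) : ∃ e' < q, x ^ e = x ^ e' := by
  induction e using Nat.strong_induction_on with
  | _ e ih =>
    by_cases he : e < q
    · exact ⟨e, he, rfl⟩
    obtain ⟨e', he', h⟩ := ih (e - q + 1) (by omega)
    refine ⟨e', he', ?_⟩
    calc x ^ e = x ^ (e - q) * x ^ q := by rw [← pow_add, Nat.sub_add_cancel (not_lt.mp he)]
      _ = x ^ (e - q + 1) := by rw [hx, pow_succ]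
      _ = x ^ e' := h

namespace MvPolynomial

universe u

variable {σ : Type*} {K : Type u} [Field K] [Fintype K]

variable (σ K) in
noncomputable def fieldIdeal : Ideal (MvPolynomial σ K) :=
  Ideal.span (Set.range fun i => X i ^ Fintype.card K - X i)

theorem fieldIdeal_le_iff {J : Ideal (MvPolynomial σ K)} :
    fieldIdeal σ K ≤ J ↔ ∀ i, X i ^ Fintype.card K - X i ∈ J := by
  rw [fieldIdeal, Ideal.span_le, Set.range_subset_iff]
  rfl

theorem fieldIdeal_le_vanishingIdeal_univ :
    fieldIdeal σ K ≤ vanishingIdeal K (Set.univ : Set (σ → K)) :=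
  fieldIdeal_le_iff.mpr fun i v _ => by simp [FiniteField.pow_card]

theorem exists_mem_restrictDegree_sub_mem_fieldIdeal [Fintype σ] (p : MvPolynomial σ K) :
    ∃ r ∈ restrictDegree σ K (Fintype.card K - 1), p - r ∈ fieldIdeal σ K := by
  simp_rw [← Ideal.Quotient.eq]
  induction p using MvPolynomial.induction_on' with
  | monomial α c =>
    have hX (i : σ) : Ideal.Quotient.mk (fieldIdeal σ K) (X i) ^ Fintype.card K =
        Ideal.Quotient.mk _ (X i) := by
      rw [← map_pow, Ideal.Quotient.eq]
      exact Ideal.subset_span ⟨i, rfl⟩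
    choose e he hpow using fun i ↦
      exists_lt_pow_eq_of_pow_eq_self Fintype.one_lt_card (hX i) (α i)
    refine ⟨monomial (Finsupp.equivFunOnFinite.symm e) c, ?_, ?_⟩
    · rw [mem_restrictDegree]
      intro s hs i
      rw [Finset.mem_singleton.mp (support_monomial_subset hs)]
      exact Nat.le_sub_one_of_lt (he i)
    · rw [monomial_eq, monomial_eq, Finsupp.prod_fintype _ _ (fun i => pow_zero _),
        Finsupp.prod_fintype _ _ (fun i => pow_zero _)]
      simp only [map_mul, map_prod, map_pow, hpow, Finsupp.coe_equivFunOnFinite_symm]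
  | add p p' hp hp' =>
    obtain ⟨r, hr, hpr⟩ := hp
    obtain ⟨r', hr', hpr'⟩ := hp'
    exact ⟨r + r', add_mem hr hr', by rw [map_add, map_add, hpr, hpr']⟩

theorem eq_zero_of_eval_eq_zero_of_mem_restrictDegree [Finite σ] {p : MvPolynomial σ K}
    (h : ∀ v, eval v p = 0) (hp : p ∈ restrictDegree σ K (Fintype.card K - 1)) : p = 0 := by
  classical
  -- `MvPolynomial.eq_zero_of_eval_eq_zero` needs `σ` and `K` in the same universe
  let e : σ ≃ ULift.{u} (Fin (Nat.card σ)) := (Finite.equivFin σ).trans Equiv.ulift.symm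
  have hp' : rename e p ∈ restrictDegree _ K (Fintype.card K - 1) := by
    rw [mem_restrictDegree_iff_sup] at hp ⊢
    intro j
    rw [← e.apply_symm_apply j, ← degreeOf_def, degreeOf_rename_of_injective e.injective,
      degreeOf_def]
    exact hp _
  have h' := eq_zero_of_eval_eq_zero _ _ (rename e p) (fun v => by rw [eval_rename]; exact h _) hp'
  exact rename_injective e e.injective (by rw [h', map_zero])

theorem vanishingIdeal_univ_eq_fieldIdeal [Finite σ] :
    vanishingIdeal K (Set.univ : Set (σ → K)) = fieldIdeal σ K := by
  cases nonempty_fintype σ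
  refine le_antisymm (fun p hp => ?_) fieldIdeal_le_vanishingIdeal_univ
  obtain ⟨r, hr, hpr⟩ := exists_mem_restrictDegree_sub_mem_fieldIdeal p
  suffices r = 0 by rwa [this, sub_zero] at hpr
  refine eq_zero_of_eval_eq_zero_of_mem_restrictDegree (fun v => ?_) hr
  have := fieldIdeal_le_vanishingIdeal_univ hpr v trivial
  rw [map_sub, hp v trivial, zero_sub, neg_eq_zero] at this
  exact this

theorem vanishingIdeal_zeroLocus_eq_self [Finite σ] {J : Ideal (MvPolynomial σ K)}
    (hJ : fieldIdeal σ K ≤ J) : vanishingIdeal K (zeroLocus K J) = J := by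
  classical
  cases nonempty_fintype σ
  refine le_antisymm (fun f hf => ?_) (le_vanishingIdeal_zeroLocus J)
  have hsep : ∀ v, ∃ g ∈ J, v ∉ zeroLocus K J → eval v g ≠ 0 := fun v => by
    by_cases hv : v ∈ zeroLocus K J
    · exact ⟨0, J.zero_mem, absurd hv⟩
    · simp only [mem_zeroLocus_iff, not_forall] at hv
      obtain ⟨g, hg, hgv⟩ := hv
      exact ⟨g, hg, fun _ => hgv⟩
  choose g hgJ hg using hsep
  set P := ∑ v, indicator v * g v ^ (Fintype.card K - 1)
  have hP : P ∈ J := J.sum_mem fun v _ ↦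
    J.mul_mem_left _ (J.pow_mem_of_mem (hgJ v) _ (Nat.sub_pos_of_lt Fintype.one_lt_card))
  have hfP : f - f * P ∈ J := by
    rw [← vanishingIdeal_univ_eq_fieldIdeal] at hJ
    refine hJ fun v _ => ?_
    have hPv : eval v P = eval v (g v) ^ (Fintype.card K - 1) := by
      rw [map_sum, Finset.sum_eq_single v]
      · rw [map_mul, eval_indicator_apply_eq_one, one_mul, map_pow]
      · intro w _ hwv
        rw [map_mul, eval_indicator_apply_eq_zero _ _ (Ne.symm hwv), zero_mul]
      · exact absurd (Finset.mem_univ v)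
    by_cases hv : v ∈ zeroLocus K J
    · have hfv : eval v f = 0 := hf v hv
      simp [aeval_eq_eval, hfv]
    · simp [aeval_eq_eval, hPv, FiniteField.pow_card_sub_one_eq_one _ (hg v hv)]
  simpa using J.add_mem hfP (J.mul_mem_left f hP)

end MvPolynomial

theorem projection_variety_eq_variety_elimination_ideal
    {F : Type*} [Field F] [Fintype F] {q : ℕ} (hq : Fintype.card F = q)
    (n m : ℕ) (J : Ideal (MvPolynomial (Fin n ⊕ Fin m) F))
    (hx : ∀ i : Fin n,
      (X (Sum.inl i) : MvPolynomial (Fin n ⊕ Fin m) F) ^ q - X (Sum.inl i) ∈ J)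
    (hy : ∀ j : Fin m,
      (X (Sum.inr j) : MvPolynomial (Fin n ⊕ Fin m) F) ^ q - X (Sum.inr j) ∈ J) :
    {b : Fin m → F | ∃ a : Fin n → F, ∀ f ∈ J, eval (Sum.elim a b) f = 0} =
      {b : Fin m → F | ∀ g : MvPolynomial (Fin m) F,
        rename Sum.inr g ∈ J → eval b g = 0} := by
  subst hq
  have hJ : fieldIdeal (Fin n ⊕ Fin m) F ≤ J :=
    fieldIdeal_le_iff.mpr (Sum.forall.mpr ⟨hx, hy⟩)
  ext b
  refine ⟨fun ⟨a, ha⟩ g hg => by simpa [eval_rename] using ha _ hg, fun hb => ?_⟩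
  by_contra hproj
  have hind : rename Sum.inr (indicator b) ∈ vanishingIdeal F (zeroLocus F J) := fun v hv => by
    have hvb : v ∘ Sum.inr ≠ b := by
      rintro rfl
      exact hproj ⟨v ∘ Sum.inl, by simpa [Sum.elim_comp_inl_inr] using hv⟩
    rw [aeval_eq_eval, eval_rename, eval_indicator_apply_eq_zero _ _ hvb]
  rw [vanishingIdeal_zeroLocus_eq_self hJ] at hind
  simpa [eval_indicator_apply_eq_one] using hb _ hind
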